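/- Let T ⊆ (2×ω)^{<ω} be a tree of pairs of finite sequences (of equal length, closed under initial segments), and let p[T] = {r ∈ 2^ω : there is y ∈ ω^ω such that (r↾n, y↾n) ∈ T for every n} be its projection. Suppose b = ⋃_n a_n ⊆ 2^{<ω}, where each a_n is an antichain in 2^{<ω} (a set of pairwise incomparable sequences), every element of a_{n+1} extends an element of a_n, and there are functions g_n : a_n → T such that: for every u ∈ a_n, g_n(u) is a sequence of length n whose string of first coordinates is an initial segment of u; and whenever n < m, u ∈ a_n, v ∈ a_m and u is an initial segment of v, then g_n(u) is an initial segment of g_m(v). Then π(b) ⊆ p[T]. -/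
import Mathlib


open Set

/-- The initial segment `r ↾ n` of a point of Cantor space, as a finite binary sequence. -/
def initSeg (r : ℕ → Bool) (n : ℕ) : List Bool := List.ofFn fun i : Fin n => r i

/-- `π(b) = {r ∈ 2^ω : r ↾ n ∈ b for infinitely many n}`. -/
def piSet (b : Set (List Bool)) : Set (ℕ → Bool) := {r | {n | initSeg r n ∈ b}.Infinite}

/-- The projection `p[T]` of a tree `T ⊆ (2 × ω)^{<ω}`: those `r ∈ 2^ω` for which there
is `y ∈ ω^ω` with `(r ↾ n, y ↾ n) ∈ T` for every `n`. -/
def proj (T : Set (List (Bool × ℕ))) : Set (ℕ → Bool) :=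
  {r | ∃ y : ℕ → ℕ, ∀ n, (List.ofFn fun i : Fin n => (r i, y i)) ∈ T}

/-- If `b = ⋃_n a_n` where the `a_n ⊆ 2^{<ω}` are antichains, each element of `a_{n+1}`
extends an element of `a_n`, and there are functions `g_n : a_n → T` such that `g_n(u)`
has length `n`, its string of first coordinates is an initial segment of `u`, and the
`g_n` are coherent along extension, then `π(b) ⊆ p[T]`. -/
theorem piSet_subset_proj
    (T : Set (List (Bool × ℕ)))
    (hT : ∀ t ∈ T, ∀ u : List (Bool × ℕ), u <+: t → u ∈ T)
    (a : ℕ → Set (List Bool))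
    (ha_anti : ∀ n, ∀ s ∈ a n, ∀ t ∈ a n, s ≠ t → ¬ s <+: t)
    (ha_ref : ∀ n, ∀ v ∈ a (n + 1), ∃ u ∈ a n, u <+: v)
    (g : ℕ → List Bool → List (Bool × ℕ))
    (hg_mem : ∀ n, ∀ u ∈ a n, g n u ∈ T)
    (hg_len : ∀ n, ∀ u ∈ a n, (g n u).length = n)
    (hg_fst : ∀ n, ∀ u ∈ a n, (g n u).map Prod.fst <+: u)
    (hg_coh : ∀ n m : ℕ, n < m → ∀ u ∈ a n, ∀ v ∈ a m, u <+: v → g n u <+: g m v) :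
    piSet (⋃ n, a n) ⊆ proj T := by
  classical
  intro r hr
  -- P u : u is an initial segment of r
  set P : List Bool → Prop := fun u => ∀ i (h : i < u.length), u[i] = r i with hPdef
  have Pmono : ∀ u v : List Bool, u <+: v → P v → P u := by
    intro u v huv hv i hi
    rw [huv.getElem hi]
    exact hv i (hi.trans_le huv.length_le)
  have PinitSeg : ∀ k, P (initSeg r k) := by
    intro k i hi
    simp [initSeg]
  have len_initSeg : ∀ k, (initSeg r k).length = k := by intro k; simp [initSeg]
  have comp : ∀ u v : List Bool, P u → P v → u.length ≤ v.length → u <+: v := by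
    intro u v hu hv hlen
    have huv : u = v.take u.length := by
      apply List.ext_getElem (by simp; omega)
      intro i h1 h2
      rw [List.getElem_take, hu i h1, hv]
    rw [huv]; exact List.take_prefix _ _
  -- descend levels
  have desc : ∀ m n, n ≤ m → ∀ v ∈ a m, ∃ u ∈ a n, u <+: v := by
    intro m
    induction m with
    | zero =>
      intro n hn v hv
      exact ⟨v, by simpa [Nat.le_zero.mp hn] using hv, List.prefix_refl v⟩
    | succ m ih =>
      intro n hn v hv
      rcases Nat.eq_or_lt_of_le hn with h | h
      · exact ⟨v, h ▸ hv, List.prefix_refl v⟩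
      · obtain ⟨u', hu', huv⟩ := ha_ref m v hv
        obtain ⟨u, hu, h2⟩ := ih n (Nat.lt_succ_iff.mp h) u' hu'
        exact ⟨u, hu, h2.trans huv⟩
  -- the level map
  have hSmem : ∀ k ∈ {n | initSeg r n ∈ ⋃ n, a n}, ∃ m, initSeg r k ∈ a m := by
    intro k hk
    simpa [Set.mem_iUnion] using hk
  let lvl : ℕ → ℕ := fun k => if h : ∃ m, initSeg r k ∈ a m then h.choose else 0
  have hlvl : ∀ k ∈ {n | initSeg r n ∈ ⋃ n, a n}, initSeg r k ∈ a (lvl k) := by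
    intro k hk
    have h := hSmem k hk
    simp only [lvl, dif_pos h]
    exact h.choose_spec
  have hinj : Set.InjOn lvl {n | initSeg r n ∈ ⋃ n, a n} := by
    intro k hk k' hk' he
    have main : ∀ k k', k ∈ {n | initSeg r n ∈ ⋃ n, a n} →
        k' ∈ {n | initSeg r n ∈ ⋃ n, a n} → lvl k = lvl k' → k < k' → False := by
      intro k k' hk hk' he hlt
      have hpre : initSeg r k <+: initSeg r k' :=
        comp _ _ (PinitSeg k) (PinitSeg k') (by rw [len_initSeg, len_initSeg]; omega)
      have hne' : initSeg r k ≠ initSeg r k' := by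
        intro h
        have := congrArg List.length h
        rw [len_initSeg, len_initSeg] at this
        omega
      exact ha_anti (lvl k) _ (hlvl k hk) _ (he ▸ hlvl k' hk') hne' hpre
    rcases lt_trichotomy k k' with h | h | h
    · exact absurd (main k k' hk hk' he h) not_false
    · exact h
    · exact absurd (main k' k hk' hk he.symm h) not_false
  have himg : (lvl '' {n | initSeg r n ∈ ⋃ n, a n}).Infinite := hr.image hinj
  -- existence of the branch through the antichains
  have exu : ∀ n, ∃ u ∈ a n, P u := by
    intro n
    obtain ⟨m, hm, hnm⟩ := himg.exists_gt n
    obtain ⟨k, hk, rfl⟩ := hm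
    obtain ⟨u, hu, hupre⟩ := desc (lvl k) n hnm.le _ (hlvl k hk)
    exact ⟨u, hu, Pmono u _ hupre (PinitSeg k)⟩
  choose u hu hPu using exu
  have uniq : ∀ n, ∀ v ∈ a n, P v → v = u n := by
    intro n v hv hPv
    by_contra hne
    rcases le_or_gt v.length (u n).length with h | h
    · exact ha_anti n v hv (u n) (hu n) hne (comp _ _ hPv (hPu n) h)
    · exact ha_anti n (u n) (hu n) v hv (Ne.symm hne) (comp _ _ (hPu n) hPv h.le)
  have chain : ∀ n m, n ≤ m → g n (u n) <+: g m (u m) := by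
    intro n m hnm
    rcases Nat.eq_or_lt_of_le hnm with h | h
    · rw [h]
    · obtain ⟨w, hw, hwm⟩ := desc m n hnm (u m) (hu m)
      have hPw : P w := Pmono w (u m) hwm (hPu m)
      rw [uniq n w hw hPw] at hwm
      exact hg_coh n m h (u n) (hu n) (u m) (hu m) hwm
  have len : ∀ n, (g n (u n)).length = n := fun n => hg_len n _ (hu n)
  refine ⟨fun i => ((g (i + 1) (u (i + 1)))[i]'(by rw [len]; omega)).2, fun n => ?_⟩
  have key : (List.ofFn fun i : Fin n =>
      (r i, ((g (i + 1) (u (i + 1)))[(i : ℕ)]'(by rw [len]; omega)).2)) = g n (u n) := by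
    apply List.ext_getElem (by simp [len])
    intro i h1 h2
    simp only [List.getElem_ofFn]
    have hi' : i < n := by rw [len] at h2; exact h2
    have hfst : ((g n (u n))[i]).1 = r i := by
      have hmap := hg_fst n (u n) (hu n)
      have hPm : P ((g n (u n)).map Prod.fst) := Pmono _ _ hmap (hPu n)
      have hi2 : i < ((g n (u n)).map Prod.fst).length := by simp [len]; omega
      have := hPm i hi2
      simpa [List.getElem_map] using this
    have hsnd : ((g n (u n))[i]).2
        = ((g (i + 1) (u (i + 1)))[i]'(by rw [len]; omega)).2 := by
      have hc := chain (i + 1) n hi'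
      have hi2 : i < (g (i + 1) (u (i + 1))).length := by rw [len]; omega
      rw [hc.getElem hi2]
    rw [← hfst, ← hsnd]
  rw [key]
  exact hg_mem n (u n) (hu n)
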